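/- Let q : ℝ³ → ℂ be integrable with bounded support. If the Fourier transform q̂(γ) := (2π)^{−3/2} ∫_{ℝ³} q(x) exp(−i γ·x) dx vanishes for all γ in some nonempty open subset of ℝ³, then q = 0 almost everywhere (Lebesgue). (Analytic continuation of the Fourier transform of a compactly supported function.) -/

import Mathlib

noncomputable section

open MeasureTheory Complex RealInnerProductSpace

open FourierTransform

abbrev E3 := EuclideanSpace ℝ (Fin 3)

/-- Entire-ness of z ↦ ∫ r x * exp((-I * ⟪u,x⟫) * z). -/
lemma entire_aux (r : E3 → ℂ) (hr : Integrable r) (u : E3) (R : ℝ) (hR : 0 ≤ R)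
    (hsupp : ∀ x ∈ Function.support r, ‖x‖ ≤ R) :
    Differentiable ℂ
      (fun z : ℂ => ∫ x : E3, r x * Complex.exp ((-Complex.I * (⟪u, x⟫ : ℝ)) * z)) := by
  intro z₀
  set M : ℝ := ‖u‖ * R with hM
  have hM0 : 0 ≤ M := mul_nonneg (norm_nonneg u) hR
  have hc : ∀ x ∈ Function.support r, |(⟪u, x⟫ : ℝ)| ≤ M := by
    intro x hx
    calc |(⟪u, x⟫ : ℝ)| ≤ ‖u‖ * ‖x‖ := abs_real_inner_le_norm u x
    _ ≤ ‖u‖ * R := mul_le_mul_of_nonneg_left (hsupp x hx) (norm_nonneg u)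
  have hcont : Continuous fun x : E3 => (⟪u, x⟫ : ℝ) := continuous_const.inner continuous_id
  set F : ℂ → E3 → ℂ := fun z x => r x * Complex.exp ((-Complex.I * (⟪u, x⟫ : ℝ)) * z) with hF
  set F' : ℂ → E3 → ℂ := fun z x =>
    r x * (Complex.exp ((-Complex.I * (⟪u, x⟫ : ℝ)) * z) * (-Complex.I * (⟪u, x⟫ : ℝ) * 1))
    with hF'
  have hre : ∀ (c : ℝ) (z : ℂ), ((-Complex.I * (c : ℂ)) * z).re = c * z.im := by
    intro c z
    simp [Complex.mul_re, Complex.mul_im]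
  have hnormF : ∀ z x, ‖F z x‖ = ‖r x‖ * Real.exp ((⟪u, x⟫ : ℝ) * z.im) := by
    intro z x
    rw [hF]; simp only [norm_mul, Complex.norm_exp, hre]
  have hnormF' : ∀ z x, ‖F' z x‖ =
      ‖r x‖ * (Real.exp ((⟪u, x⟫ : ℝ) * z.im) * |(⟪u, x⟫ : ℝ)|) := by
    intro z x
    rw [hF']
    simp only [mul_one, norm_mul, Complex.norm_exp, hre, norm_neg,
      Complex.norm_I, Complex.norm_real, Real.norm_eq_abs, one_mul]
  have hmeasexp : ∀ z : ℂ, Continuous fun x : E3 =>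
      Complex.exp ((-Complex.I * (⟪u, x⟫ : ℝ)) * z) := by
    intro z
    exact Complex.continuous_exp.comp
      (((continuous_const.mul (Complex.continuous_ofReal.comp hcont)).mul continuous_const))
  have hFmeas : ∀ z : ℂ, AEStronglyMeasurable (F z) volume := fun z =>
    hr.aestronglyMeasurable.mul (hmeasexp z).aestronglyMeasurable
  have hF'meas : AEStronglyMeasurable (F' z₀) volume := by
    apply hr.aestronglyMeasurable.mul
    exact ((hmeasexp z₀).mul
      ((continuous_const.mul (Complex.continuous_ofReal.comp hcont)).mul
        continuous_const)).aestronglyMeasurable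
  -- the exponent bound on the support
  have hexp_bound : ∀ (z : ℂ), ‖z‖ ≤ ‖z₀‖ + 1 → ∀ x ∈ Function.support r,
      Real.exp ((⟪u, x⟫ : ℝ) * z.im) ≤ Real.exp (M * (‖z₀‖ + 1)) := by
    intro z hz x hx
    apply Real.exp_le_exp.2
    calc (⟪u, x⟫ : ℝ) * z.im ≤ |(⟪u, x⟫ : ℝ) * z.im| := le_abs_self _
    _ = |(⟪u, x⟫ : ℝ)| * |z.im| := abs_mul _ _
    _ ≤ M * (‖z₀‖ + 1) := by
        apply mul_le_mul (hc x hx) ((Complex.abs_im_le_norm z).trans hz) (abs_nonneg _) hM0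
  -- integrability of F z₀
  have hFint : Integrable (F z₀) volume := by
    apply Integrable.mono' (hr.norm.const_mul (Real.exp (M * (‖z₀‖ + 1)))) (hFmeas z₀)
    filter_upwards with x
    rw [hnormF]
    by_cases hx : x ∈ Function.support r
    · rw [mul_comm (Real.exp _)]
      exact mul_le_mul_of_nonneg_left
        (hexp_bound z₀ (by linarith) x hx) (norm_nonneg _)
    · simp only [Function.mem_support, not_not] at hx
      simp [hx]
  -- uniform bound for F'
  set bound : E3 → ℝ := fun x => ‖r x‖ * (Real.exp (M * (‖z₀‖ + 1)) * M) with hbound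
  have hboundint : Integrable bound volume := hr.norm.mul_const _
  have h_bd : ∀ᵐ x ∂(volume : Measure E3), ∀ z ∈ Metric.ball z₀ 1, ‖F' z x‖ ≤ bound x := by
    filter_upwards with x z hz
    rw [hnormF', hbound]
    by_cases hx : x ∈ Function.support r
    · apply mul_le_mul_of_nonneg_left _ (norm_nonneg _)
      have hz' : ‖z‖ ≤ ‖z₀‖ + 1 := by
        have := norm_sub_norm_le z z₀
        have h2 : ‖z - z₀‖ < 1 := by simpa [dist_eq_norm] using hz
        linarith
      exact mul_le_mul (hexp_bound z hz' x hx) (hc x hx) (abs_nonneg _) (Real.exp_nonneg _)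
    · simp only [Function.mem_support, not_not] at hx
      simp [hx]
  have h_diff : ∀ᵐ x ∂(volume : Measure E3), ∀ z ∈ Metric.ball z₀ 1,
      HasDerivAt (fun w => F w x) (F' z x) z := by
    filter_upwards with x z _
    exact (((hasDerivAt_id z).const_mul ((-Complex.I * ((⟪u, x⟫ : ℝ) : ℂ)))).cexp).const_mul (r x)
  have := hasDerivAt_integral_of_dominated_loc_of_deriv_le (F := F) (F' := F')
    (Metric.ball_mem_nhds z₀ zero_lt_one) (Filter.Eventually.of_forall hFmeas) hFint hF'meas h_bd hboundint h_diff
  exact this.2.differentiableAt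

lemma exists_schwartz_of_compact (g : E3 → ℝ) (hg : ContDiff ℝ (⊤:ℕ∞) g)
    (hsupp : HasCompactSupport g) :
    ∃ G : SchwartzMap E3 ℂ, ⇑G = fun x => (g x : ℂ) := by
  have hsm : ContDiff ℝ (⊤:ℕ∞) (fun x => (g x : ℂ)) := Complex.ofRealCLM.contDiff.comp hg
  have hGsupp : HasCompactSupport (fun x : E3 => (g x : ℂ)) :=
    hsupp.comp_left (g := Complex.ofReal) Complex.ofReal_zero
  refine ⟨⟨fun x => (g x : ℂ), hsm, ?_⟩, rfl⟩
  intro k n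
  have h1 : HasCompactSupport (iteratedFDeriv ℝ n (fun x : E3 => (g x : ℂ))) :=
    hGsupp.iteratedFDeriv n
  have h2 : Continuous (iteratedFDeriv ℝ n (fun x : E3 => (g x : ℂ))) :=
    hsm.continuous_iteratedFDeriv (by exact_mod_cast le_top)
  have hφc : Continuous
      (fun x : E3 => ‖x‖ ^ k * ‖iteratedFDeriv ℝ n (fun x : E3 => (g x : ℂ)) x‖) :=
    (continuous_norm.pow k).mul h2.norm
  have hφs : HasCompactSupport
      (fun x : E3 => ‖x‖ ^ k * ‖iteratedFDeriv ℝ n (fun x : E3 => (g x : ℂ)) x‖) :=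
    h1.norm.mul_left
  obtain ⟨C, hC⟩ := hφs.exists_bound_of_continuous hφc
  refine ⟨C, fun x => ?_⟩
  have := hC x
  rwa [Real.norm_eq_abs, _root_.abs_of_nonneg (by positivity)] at this

lemma ft_zero_ae (q : E3 → ℂ) (hq : Integrable q) (h : ∀ w, 𝓕 q w = 0) :
    q =ᵐ[volume] 0 := by
  have : ∀ᵐ x ∂(volume : Measure E3), q x = 0 := by
    apply ae_eq_zero_of_integral_contDiff_smul_eq_zero hq.locallyIntegrable
    intro g hg hgsupp
    obtain ⟨G, hG⟩ := exists_schwartz_of_compact g hg hgsupp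
    set h' : SchwartzMap E3 ℂ := (FourierTransform.fourierCLE ℂ (SchwartzMap E3 ℂ)).symm G with hh'
    have hfour : 𝓕 ⇑h' = ⇑G := by
      have := congrArg DFunLike.coe (FourierTransform.fourierCLE_apply (R := ℂ) h')
      rw [SchwartzMap.fourier_coe] at this
      rw [hh'] at this ⊢
      rw [← this, ContinuousLinearEquiv.apply_symm_apply]
    have hflip : (innerₗ E3).flip = innerₗ E3 :=
      LinearMap.ext fun v => LinearMap.ext fun w => real_inner_comm v w
    have mult := VectorFourier.integral_fourierIntegral_smul_eq_flip
      (e := Real.fourierChar) (L := innerₗ E3) (μ := (volume : Measure E3))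
      (ν := (volume : Measure E3))
      Real.continuous_fourierChar (by exact continuous_inner) hq h'.integrable
    rw [hflip] at mult
    have hL : ∀ ξ, VectorFourier.fourierIntegral 𝐞 volume (innerₗ E3) q ξ = 0 := h
    have lhs0 : (∫ ξ : E3,
        (VectorFourier.fourierIntegral 𝐞 volume (innerₗ E3) q ξ) • h' ξ) = 0 := by
      simp [hL]
    have rhs : (∫ x : E3, q x • VectorFourier.fourierIntegral 𝐞 volume (innerₗ E3) (⇑h') x)
        = ∫ x : E3, g x • q x := by
      apply integral_congr_ae
      filter_upwards with x
      have : VectorFourier.fourierIntegral 𝐞 volume (innerₗ E3) (⇑h') x = G x := by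
        rw [show VectorFourier.fourierIntegral 𝐞 volume (innerₗ E3) (⇑h') = 𝓕 ⇑h' from rfl,
          hfour]
      rw [this, hG]
      simp only [smul_eq_mul, Complex.real_smul]
      ring
    rw [lhs0] at mult
    rw [← rhs, ← mult]
  exact this

/-- The Fourier transform `q̂(γ) = (2π)^{-3/2} ∫ q(x) exp(-iγ·x) dx` of a complex-valued
function on ℝ³. -/
def ftC (q : EuclideanSpace ℝ (Fin 3) → ℂ) (γ : EuclideanSpace ℝ (Fin 3)) : ℂ :=
  (((2 * Real.pi) ^ (-(3 : ℝ) / 2) : ℝ) : ℂ) *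
    ∫ x : EuclideanSpace ℝ (Fin 3), q x * Complex.exp (-Complex.I * (⟪γ, x⟫ : ℝ))

theorem fourier_vanishing_on_open_set_of_compact_support
    (q : EuclideanSpace ℝ (Fin 3) → ℂ) (hq : Integrable q)
    (hsupp : Bornology.IsBounded (Function.support q))
    (V : Set (EuclideanSpace ℝ (Fin 3))) (hV : IsOpen V) (hVne : V.Nonempty)
    (hvan : ∀ γ ∈ V, ftC q γ = 0) :
    q =ᵐ[volume] 0 := by
  obtain ⟨R₀, hsub₀⟩ := hsupp.subset_closedBall 0
  set R : ℝ := max R₀ 0 with hRdef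
  have hR0 : (0:ℝ) ≤ R := le_max_right _ _
  have hsub : Function.support q ⊆ Metric.closedBall 0 R :=
    hsub₀.trans (Metric.closedBall_subset_closedBall (le_max_left _ _))
  set Φ : E3 → ℂ := fun γ => ∫ x : E3, q x * Complex.exp (-Complex.I * (⟪γ, x⟫ : ℝ)) with hΦdef
  have hΦV : ∀ γ ∈ V, Φ γ = 0 := by
    intro γ hγ
    have h1 := hvan γ hγ
    unfold ftC at h1
    rcases mul_eq_zero.1 h1 with h | h
    · exfalso
      rw [Complex.ofReal_eq_zero] at h
      exact absurd h (ne_of_gt (Real.rpow_pos_of_pos (by positivity) _))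
    · exact h
  obtain ⟨γ₀, hγ₀⟩ := hVne
  obtain ⟨ε, hε, hball⟩ := Metric.isOpen_iff.1 hV γ₀ hγ₀
  have hΦ : ∀ γ, Φ γ = 0 := by
    intro γ
    set u : E3 := γ - γ₀ with hu
    set r : E3 → ℂ := fun x => q x * Complex.exp (-Complex.I * (⟪γ₀, x⟫ : ℝ)) with hr
    have hexpnorm : ∀ (c : ℝ), ‖Complex.exp (-Complex.I * (c : ℂ))‖ = 1 := by
      intro c
      rw [Complex.norm_exp]
      simp [Complex.mul_re]
    have hrmeas : AEStronglyMeasurable r volume := by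
      apply hq.aestronglyMeasurable.mul
      refine (Complex.continuous_exp.comp ?_).aestronglyMeasurable
      exact continuous_const.mul
        (Complex.continuous_ofReal.comp (continuous_const.inner continuous_id))
    have hrint : Integrable r := by
      apply Integrable.mono' hq.norm hrmeas
      filter_upwards with x
      rw [hr]
      simp only [norm_mul, hexpnorm, mul_one, le_refl]
    have hrsupp : ∀ x ∈ Function.support r, ‖x‖ ≤ R := by
      intro x hx
      have hxq : x ∈ Function.support q := by
        rw [Function.mem_support] at hx ⊢
        intro h0
        apply hx
        rw [hr]; simp [h0]
      simpa [mem_closedBall_zero_iff] using mem_closedBall_zero_iff.1 (hsub hxq)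
    set g : ℂ → ℂ := fun z => ∫ x : E3, r x * Complex.exp ((-Complex.I * (⟪u, x⟫ : ℝ)) * z)
      with hg
    have hdiff : Differentiable ℂ g := entire_aux r hrint u R hR0 hrsupp
    have han : AnalyticOnNhd ℂ g Set.univ :=
      hdiff.differentiableOn.analyticOnNhd isOpen_univ
    have hgt : ∀ t : ℝ, g (t : ℂ) = Φ (γ₀ + t • u) := by
      intro t
      rw [hg, hΦdef]
      apply integral_congr_ae
      filter_upwards with x
      have hin : (⟪γ₀ + t • u, x⟫ : ℝ) = ⟪γ₀, x⟫ + t * ⟪u, x⟫ := by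
        rw [inner_add_left, real_inner_smul_left]
      rw [hr, hin, show (-Complex.I * ((⟪γ₀, x⟫ + t * ⟪u, x⟫ : ℝ) : ℂ)) =
        (-Complex.I * ((⟪γ₀, x⟫ : ℝ) : ℂ)) + (-Complex.I * ((⟪u, x⟫ : ℝ) : ℂ)) * (t : ℂ) by
          push_cast; ring, Complex.exp_add]
      ring
    have hsmall : ∀ t : ℝ, |t| < ε / (‖u‖ + 1) → g (t : ℂ) = 0 := by
      intro t ht
      rw [hgt]
      apply hΦV
      apply hball
      rw [Metric.mem_ball, dist_eq_norm]
      have h1 : ‖γ₀ + t • u - γ₀‖ = |t| * ‖u‖ := by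
        simp [norm_smul]
      rw [h1]
      have h2 : |t| * (‖u‖ + 1) < ε := by
        rw [lt_div_iff₀ (by positivity)] at ht
        exact ht
      nlinarith [abs_nonneg t, norm_nonneg u]
    have hfreq : ∃ᶠ z in nhdsWithin (0 : ℂ) {(0:ℂ)}ᶜ, g z = 0 := by
      set δ : ℝ := ε / (‖u‖ + 1) with hδdef
      have hδ : 0 < δ := by positivity
      have htend0 : Filter.Tendsto (fun n : ℕ => δ / (n + 2)) Filter.atTop (nhds 0) := by
        apply Filter.Tendsto.div_atTop tendsto_const_nhds
        exact Filter.tendsto_atTop_add_const_right _ 2 tendsto_natCast_atTop_atTop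
      have htendC : Filter.Tendsto (fun n : ℕ => ((δ / (n + 2) : ℝ) : ℂ)) Filter.atTop
          (nhdsWithin (0 : ℂ) {(0:ℂ)}ᶜ) := by
        rw [tendsto_nhdsWithin_iff]
        constructor
        · have h3 := (Complex.continuous_ofReal.tendsto 0).comp htend0
          rw [Complex.ofReal_zero] at h3
          exact h3
        · filter_upwards with n
          simp only [Set.mem_compl_iff, Set.mem_singleton_iff]
          have : (0:ℝ) < δ / (n + 2) := by positivity
          exact_mod_cast Complex.ofReal_ne_zero.2 (ne_of_gt this)
      apply htendC.frequently
      apply Filter.Eventually.frequently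
      filter_upwards with n
      apply hsmall
      have hpos : (0:ℝ) < δ / (n + 2) := by positivity
      rw [abs_of_pos hpos, hδdef]
      apply div_lt_self hδ
      have : (0:ℝ) ≤ (n : ℝ) := Nat.cast_nonneg n
      linarith
    have hgz : g 1 = 0 :=
      han.eqOn_zero_of_preconnected_of_frequently_eq_zero isPreconnected_univ
        (Set.mem_univ 0) hfreq (Set.mem_univ 1)
    have := hgt 1
    rw [Complex.ofReal_one, hgz] at this
    rw [show γ₀ + (1:ℝ) • u = γ /- -/ by rw [one_smul, hu]; abel] at this
    exact this.symm
  have hft : ∀ w, 𝓕 q w = 0 := by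
    intro w
    rw [Real.fourier_eq']
    have heq : (∫ v : E3, Complex.exp (((-2 * Real.pi * ⟪v, w⟫ : ℝ) : ℂ) * Complex.I) • q v)
        = Φ ((2 * Real.pi) • w) := by
      rw [hΦdef]
      apply integral_congr_ae
      filter_upwards with v
      rw [smul_eq_mul]
      rw [show (⟪(2 * Real.pi) • w, v⟫ : ℝ) = 2 * Real.pi * ⟪v, w⟫ by
        rw [real_inner_smul_left, real_inner_comm w v]]
      rw [show ((-2 * Real.pi * ⟪v, w⟫ : ℝ) : ℂ) * Complex.I =
        -Complex.I * ((2 * Real.pi * ⟪v, w⟫ : ℝ) : ℂ) by push_cast; ring]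
      ring
    rw [heq, hΦ]
  exact ft_zero_ae q hq hft
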